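/- arXiv:math/0602073 — 9 statements merged into one kernel-verified Lean document; each statement's English description precedes it below -/
import Mathlib

section
/- Let L be a weighted Laplacian matrix of order n, i.e., a real symmetric n×n matrix with nonpositive off-diagonal entries and all row sums equal to zero. Then I + L is invertible, and the matrix Q = (I + L)⁻¹ is symmetric, has all entries nonnegative, and is doubly stochastic: every row sum and every column sum of Q equals 1. -/
/-!
`1 + L` satisfies a discrete minimum principle: at an index `i` where `x` is minimal,
`(L *ᵥ x) i = ∑ j, L i j * (x j - x i) ≤ 0`, so `((1 + L) *ᵥ x) i ≤ x i`. Hence `(1 + L) *ᵥ x ≥ 0`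
forces `x ≥ 0`, which gives injectivity (apply it to `x` and `-x`) and, column by column,
nonnegativity of the inverse. Since `L` kills constant vectors, so does `(1 + L)⁻¹ - 1`, giving
unit row sums; symmetry then gives unit column sums.
-/

open Matrix

namespace Matrix

variable {ι R : Type*} [Fintype ι] [DecidableEq ι]

theorem sum_inv_one_add_apply [CommRing R] {L : Matrix ι ι R} (hrow : ∀ i, ∑ j, L i j = 0)
    (hL : IsUnit (1 + L)) (i : ι) : ∑ j, (1 + L)⁻¹ i j = 1 := by
  have hker : L *ᵥ (1 : ι → R) = 0 := funext fun k => by simpa [mulVec, dotProduct] using hrow k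
  have hfix : (1 + L) *ᵥ (1 : ι → R) = 1 := by rw [add_mulVec, one_mulVec, hker, add_zero]
  have hinv : (1 + L)⁻¹ * (1 + L) = 1 := nonsing_inv_mul _ ((isUnit_iff_isUnit_det _).1 hL)
  calc ∑ j, (1 + L)⁻¹ i j = ((1 + L)⁻¹ *ᵥ 1) i := by simp [mulVec, dotProduct]
    _ = ((1 + L)⁻¹ *ᵥ ((1 + L) *ᵥ 1)) i := by rw [hfix]
    _ = 1 := by rw [mulVec_mulVec, hinv, one_mulVec, Pi.one_apply]

section Laplacian

variable [Field R] [LinearOrder R] [IsStrictOrderedRing R] {L : Matrix ι ι R}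
  (hoff : ∀ i j, i ≠ j → L i j ≤ 0) (hrow : ∀ i, ∑ j, L i j = 0)
include hoff hrow

omit [DecidableEq ι] in
theorem mulVec_apply_nonpos_of_forall_le {x : ι → R} {i : ι} (hmin : ∀ j, x i ≤ x j) :
    (L *ᵥ x) i ≤ 0 := by
  have hshift : (L *ᵥ x) i = ∑ j, L i j * (x j - x i) := by
    simp only [mulVec, dotProduct, mul_sub, Finset.sum_sub_distrib, ← Finset.sum_mul, hrow i,
      zero_mul, sub_zero]
  rw [hshift]
  refine Finset.sum_nonpos fun j _ => ?_
  rcases eq_or_ne i j with rfl | hij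
  · simp
  · exact mul_nonpos_of_nonpos_of_nonneg (hoff i j hij) (sub_nonneg.2 (hmin j))

theorem nonneg_of_one_add_mulVec_nonneg {x : ι → R} (hx : 0 ≤ (1 + L) *ᵥ x) : 0 ≤ x := by
  intro j
  have : Nonempty ι := ⟨j⟩
  obtain ⟨i, hmin⟩ := Finite.exists_min x
  have hi : 0 ≤ x i + (L *ᵥ x) i := by simpa [add_mulVec] using hx i
  have := mulVec_apply_nonpos_of_forall_le hoff hrow hmin
  exact (by linarith : (0 : R) ≤ x i).trans (hmin j)

theorem isUnit_one_add : IsUnit (1 + L) := by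
  refine mulVec_injective_iff_isUnit.1 fun x y hxy => ?_
  have hzero : (1 + L) *ᵥ (x - y) = 0 := by rw [mulVec_sub, hxy, sub_self]
  have hle := nonneg_of_one_add_mulVec_nonneg hoff hrow hzero.ge
  have hge := nonneg_of_one_add_mulVec_nonneg hoff hrow (x := y - x)
    (by rw [← neg_sub, mulVec_neg, hzero, neg_zero])
  exact sub_eq_zero.1 (le_antisymm (sub_nonpos.2 (sub_nonneg.1 hge)) hle)

theorem inv_one_add_nonneg (i j : ι) : 0 ≤ (1 + L)⁻¹ i j := by
  have hinv : (1 + L) * (1 + L)⁻¹ = 1 :=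
    mul_nonsing_inv _ ((isUnit_iff_isUnit_det _).1 (isUnit_one_add hoff hrow))
  have hcol : 0 ≤ (1 + L)⁻¹ *ᵥ Pi.single j 1 := by
    refine nonneg_of_one_add_mulVec_nonneg hoff hrow ?_
    rw [mulVec_mulVec, hinv, one_mulVec]
    exact Pi.single_nonneg.2 zero_le_one
  simpa [mulVec_single_one] using hcol i

end Laplacian

end Matrix

/-- For a weighted Laplacian matrix `L` (symmetric, nonpositive off-diagonal entries,
zero row sums), the matrix `1 + L` is invertible and `Q = (1 + L)⁻¹` is symmetric,
nonnegative, and doubly stochastic. -/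
theorem stmt_5 {n : ℕ} (L : Matrix (Fin n) (Fin n) ℝ)
    (hsym : L.IsSymm) (hoff : ∀ i j, i ≠ j → L i j ≤ 0)
    (hrow : ∀ i, ∑ j, L i j = 0) :
    IsUnit (1 + L) ∧
    ((1 + L)⁻¹).IsSymm ∧
    (∀ i j, 0 ≤ (1 + L)⁻¹ i j) ∧
    (∀ i, ∑ j, (1 + L)⁻¹ i j = 1) ∧
    (∀ j, ∑ i, (1 + L)⁻¹ i j = 1) := by
  have hunit := isUnit_one_add hoff hrow
  have hQsym : ((1 + L)⁻¹).IsSymm := (isSymm_one.add hsym).inv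
  refine ⟨hunit, hQsym, inv_one_add_nonneg hoff hrow, sum_inv_one_add_apply hrow hunit,
    fun j => ?_⟩
  simpa only [hQsym.apply] using sum_inv_one_add_apply hrow hunit j
end

section
/- Let L be a weighted Laplacian matrix of order n, i.e., a real symmetric n×n matrix with nonpositive off-diagonal entries and all row sums equal to zero, and let Q = (I + L)⁻¹. Then Q satisfies diagonal maximality: for all indices i ≠ j, Q i i > Q i j. -/
/-!
Put `A = 1 + L`. At a vertex `m` where a vector `x` is maximal, every term of
`∑ₖ L m k * (x k - x m)` is `≥ 0`, so `x m ≤ (A x) m`; symmetrically `(A x) m ≤ x m` at a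
minimum. This maximum principle makes `A` inverse-positive (hence invertible). The column
`x = A⁻¹ eᵢ` is then `≥ 0`, and a maximum of `x` at some `m ≠ i` would give `x m ≤ (A x) m = 0`,
forcing `x = 0`; so `i` is the unique maximizer of its column. Symmetry of `A⁻¹` turns this
column statement into the row statement.
-/

open Matrix

section MaximumPrinciple

variable {ι : Type*} [Fintype ι] [DecidableEq ι] {L : Matrix ι ι ℝ}

theorem one_add_mulVec_apply_eq_add_sum_sub (hrow : ∀ i, ∑ j, L i j = 0) (x : ι → ℝ) (m : ι) :
    ((1 + L) *ᵥ x) m = x m + ∑ k, L m k * (x k - x m) := by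
  rw [add_mulVec, one_mulVec, Pi.add_apply]
  simp only [mulVec, dotProduct, mul_sub, Finset.sum_sub_distrib, ← Finset.sum_mul, hrow m,
    zero_mul, sub_zero]

variable (hoff : ∀ i j, i ≠ j → L i j ≤ 0) (hrow : ∀ i, ∑ j, L i j = 0)
include hoff hrow

theorem le_one_add_mulVec_apply_of_forall_le {x : ι → ℝ} {m : ι} (hmax : ∀ k, x k ≤ x m) :
    x m ≤ ((1 + L) *ᵥ x) m := by
  rw [one_add_mulVec_apply_eq_add_sum_sub hrow]
  refine le_add_of_nonneg_right (Finset.sum_nonneg fun k _ => ?_)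
  rcases eq_or_ne m k with rfl | hmk
  · simp
  · exact mul_nonneg_of_nonpos_of_nonpos (hoff m k hmk) (sub_nonpos.2 (hmax k))

theorem one_add_mulVec_apply_le_of_forall_ge {x : ι → ℝ} {m : ι} (hmin : ∀ k, x m ≤ x k) :
    ((1 + L) *ᵥ x) m ≤ x m := by
  have := le_one_add_mulVec_apply_of_forall_le hoff hrow (x := -x) (m := m)
    fun k => neg_le_neg (hmin k)
  simpa only [mulVec_neg, Pi.neg_apply, neg_le_neg_iff] using this

theorem nonneg_of_nonneg_one_add_mulVec {x : ι → ℝ} (hx : 0 ≤ (1 + L) *ᵥ x) : 0 ≤ x := by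
  intro k
  have : Nonempty ι := ⟨k⟩
  obtain ⟨m, hmin⟩ := Finite.exists_min x
  exact (hx m).trans <| (one_add_mulVec_apply_le_of_forall_ge hoff hrow hmin).trans (hmin k)

theorem det_one_add_ne_zero : (1 + L).det ≠ 0 := by
  rw [Ne, ← exists_mulVec_eq_zero_iff]
  rintro ⟨x, hx0, hx⟩
  have hnonneg : 0 ≤ x := nonneg_of_nonneg_one_add_mulVec hoff hrow hx.ge
  have hnonpos : x ≤ 0 := by
    simpa using nonneg_of_nonneg_one_add_mulVec hoff hrow (x := -x) (by simp [mulVec_neg, hx])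
  exact hx0 (le_antisymm hnonpos hnonneg)

theorem one_add_inv_apply_lt_apply_self {i j : ι} (hij : j ≠ i) :
    (1 + L)⁻¹ j i < (1 + L)⁻¹ i i := by
  set x := (1 + L)⁻¹ *ᵥ Pi.single i 1 with hxdef
  have hx : (1 + L) *ᵥ x = Pi.single i 1 := by
    rw [hxdef, mulVec_mulVec, mul_nonsing_inv _ (det_one_add_ne_zero hoff hrow).isUnit,
      one_mulVec]
  have hnonneg : 0 ≤ x :=
    nonneg_of_nonneg_one_add_mulVec hoff hrow (hx ▸ Pi.single_nonneg.2 zero_le_one)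
  have not_max : ∀ m ≠ i, ¬ ∀ k, x k ≤ x m := by
    intro m hmi hmax
    have hxm : x m ≤ 0 := by
      simpa [hx, hmi] using le_one_add_mulVec_apply_of_forall_le hoff hrow hmax
    have hx0 : x = 0 := le_antisymm (fun k => (hmax k).trans hxm) hnonneg
    simpa [hx0] using congrFun hx i
  have : Nonempty ι := ⟨i⟩
  obtain ⟨m, hmax⟩ := Finite.exists_max x
  obtain rfl : m = i := by_contra fun hmi => not_max m hmi hmax
  have hlt : x j < x m := (hmax j).lt_of_ne fun h => not_max j hij (h ▸ hmax)
  simpa [hxdef, mulVec_single_one] using hlt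

end MaximumPrinciple

/-- For a weighted Laplacian matrix `L`, the matrix `Q = (1 + L)⁻¹` of relative forest
accessibilities satisfies diagonal maximality: `Q i i > Q i j` whenever `i ≠ j`. -/
theorem stmt_6 {n : ℕ} (L : Matrix (Fin n) (Fin n) ℝ)
    (hsym : L.IsSymm) (hoff : ∀ i j, i ≠ j → L i j ≤ 0)
    (hrow : ∀ i, ∑ j, L i j = 0) :
    ∀ i j, i ≠ j → (1 + L)⁻¹ i i > (1 + L)⁻¹ i j := by
  intro i j hij
  rw [gt_iff_lt, ← (isSymm_one.add hsym).inv.apply i j]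
  exact one_add_inv_apply_lt_apply_self hoff hrow hij.symm
end

section
/- Let L be a weighted Laplacian matrix of order n, i.e., a real symmetric n×n matrix with nonpositive off-diagonal entries and all row sums equal to zero, and let Q = (I + L)⁻¹. Then Q satisfies the triangle inequality for proximities: for all indices i, j, k, Q i j + Q i k − Q j k ≤ Q i i; moreover, if j = k and i ≠ j, the inequality is strict: 2·(Q i j) − Q j j < Q i i. -/
/-!
Write `Q = (1 + L)⁻¹` and `y = Q (eᵢ - eⱼ)`, so that `yₖ = Qₖᵢ - Qₖⱼ` and `(1 + L) y = eᵢ - eⱼ`.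
Since `L` has nonpositive off-diagonal entries and zero row sums, `(L y)ₘ ≥ 0` wherever `y` is
maximal (a discrete maximum principle), so `yₘ ≤ (eᵢ - eⱼ)ₘ` there. Hence either the maximum
of `y` is attained at `i`, or `y ≤ 0`; in the latter case `y = 0`, because the zero column sums of
`L` give `∑ y = ∑ (eᵢ - eⱼ) = 0`. Either way `yₖ ≤ yᵢ`, which by the symmetry of `Q` is the
triangle inequality. For the strict inequality, `L` is positive semidefinite, so `Q` is positive
definite and `(eᵢ - eⱼ)ᵀ Q (eᵢ - eⱼ) = Qᵢᵢ - 2 Qᵢⱼ + Qⱼⱼ > 0`.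
-/

open Finset Matrix

namespace Matrix

variable {ι : Type*} [Fintype ι]

structure IsWeightedLaplacian (L : Matrix ι ι ℝ) : Prop where
  isSymm : L.IsSymm
  nonpos_of_ne : ∀ i j, i ≠ j → L i j ≤ 0
  sum_row_eq_zero : ∀ i, ∑ j, L i j = 0

lemma mulVec_apply_nonneg_of_forall_le {L : Matrix ι ι ℝ} (hoff : ∀ i j, i ≠ j → L i j ≤ 0)
    (hrow : ∀ i, ∑ j, L i j = 0) {y : ι → ℝ} {m : ι} (hm : ∀ p, y p ≤ y m) :
    0 ≤ (L *ᵥ y) m := by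
  have hshift : (L *ᵥ y) m = ∑ q, L m q * (y q - y m) := by
    simp only [mulVec, dotProduct, mul_sub, sum_sub_distrib, ← sum_mul, hrow m, zero_mul,
      sub_zero]
  rw [hshift]
  refine sum_nonneg fun q _ => ?_
  rcases eq_or_ne m q with rfl | hmq
  · simp
  · exact mul_nonneg_of_nonpos_of_nonpos (hoff m q hmq) (sub_nonpos.2 (hm q))

lemma PosDef.add_apply_lt_add_apply [DecidableEq ι] {A : Matrix ι ι ℝ} (hA : A.PosDef)
    {i j : ι} (hij : i ≠ j) : A i j + A j i < A i i + A j j := by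
  have hv : (Pi.single i 1 - Pi.single j 1 : ι → ℝ) ≠ 0 := by
    intro h
    simpa [hij] using congrFun h i
  have hpos := hA.dotProduct_mulVec_pos hv
  simp only [star_trivial, mulVec_sub, mulVec_single, MulOpposite.op_one, one_smul,
    dotProduct_sub, sub_dotProduct, single_dotProduct, col_apply, one_mul, sub_pos] at hpos
  linarith

namespace IsWeightedLaplacian

variable {L : Matrix ι ι ℝ}

lemma sum_col_eq_zero (hL : L.IsWeightedLaplacian) (j : ι) : ∑ i, L i j = 0 := by
  simpa only [hL.isSymm.apply j] using hL.sum_row_eq_zero j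

lemma sum_mulVec_eq_zero (hL : L.IsWeightedLaplacian) (y : ι → ℝ) : ∑ p, (L *ᵥ y) p = 0 := by
  simp only [mulVec, dotProduct]
  rw [sum_comm]
  simp [← sum_mul, hL.sum_col_eq_zero]

lemma two_mul_dotProduct_mulVec (hL : L.IsWeightedLaplacian) (x : ι → ℝ) :
    2 * (x ⬝ᵥ (L *ᵥ x)) = ∑ p, ∑ q, -L p q * (x p - x q) ^ 2 := by
  have hrow : ∑ p, ∑ q, L p q * x p ^ 2 = 0 := by
    simp [← sum_mul, hL.sum_row_eq_zero]
  have hcol : ∑ p, ∑ q, L p q * x q ^ 2 = 0 := by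
    rw [sum_comm]
    simp [← sum_mul, hL.sum_col_eq_zero]
  calc 2 * (x ⬝ᵥ (L *ᵥ x))
    _ = ∑ p, ∑ q, 2 * (L p q * x p * x q) - ∑ p, ∑ q, L p q * x p ^ 2
          - ∑ p, ∑ q, L p q * x q ^ 2 := by
      simp only [hrow, hcol, sub_zero, dotProduct, mulVec, mul_sum]
      exact sum_congr rfl fun p _ => sum_congr rfl fun q _ => by ring
    _ = ∑ p, ∑ q, -L p q * (x p - x q) ^ 2 := by
      simp only [← sum_sub_distrib]
      exact sum_congr rfl fun p _ => sum_congr rfl fun q _ => by ring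

lemma posSemidef (hL : L.IsWeightedLaplacian) : L.PosSemidef := by
  refine .of_dotProduct_mulVec_nonneg ?_ fun x => ?_
  · simpa [IsHermitian, conjTranspose_eq_transpose_of_trivial] using hL.isSymm.eq
  have hsum : 0 ≤ ∑ p, ∑ q, -L p q * (x p - x q) ^ 2 := by
    refine sum_nonneg fun p _ => sum_nonneg fun q _ => ?_
    rcases eq_or_ne p q with rfl | hpq
    · simp
    · exact mul_nonneg (neg_nonneg.2 (hL.nonpos_of_ne p q hpq)) (sq_nonneg _)
  rw [← hL.two_mul_dotProduct_mulVec] at hsum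
  rw [star_trivial]
  linarith

variable [DecidableEq ι]

lemma posDef_one_add (hL : L.IsWeightedLaplacian) : (1 + L).PosDef :=
  PosDef.one.add_posSemidef hL.posSemidef

lemma le_of_one_add_mulVec_eq (hL : L.IsWeightedLaplacian) {y : ι → ℝ} {i j : ι}
    (hy : (1 + L) *ᵥ y = Pi.single i 1 - Pi.single j 1) (k : ι) : y k ≤ y i := by
  obtain ⟨m, -, hm⟩ := exists_max_image univ y ⟨i, mem_univ i⟩
  replace hm : ∀ p, y p ≤ y m := fun p => hm p (mem_univ p)
  have hym : y m ≤ (Pi.single i 1 - Pi.single j 1 : ι → ℝ) m := by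
    rw [← hy, add_mulVec, one_mulVec, Pi.add_apply]
    linarith [mulVec_apply_nonneg_of_forall_le hL.nonpos_of_ne hL.sum_row_eq_zero hm]
  rcases le_or_gt (y m) 0 with hle | hpos
  · have hsum : ∑ p, y p = 0 := by
      simpa [add_mulVec, sum_add_distrib, hL.sum_mulVec_eq_zero] using
        congrArg (fun v => ∑ p, v p) hy
    have hzero : ∀ p, y p = 0 := fun p =>
      (sum_eq_zero_iff_of_nonpos fun q _ => (hm q).trans hle).1 hsum p (mem_univ p)
    rw [hzero k, hzero i]
  · have hmi : m = i := by
      by_contra hmi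
      have : (Pi.single i 1 - Pi.single j 1 : ι → ℝ) m ≤ 0 := by
        simp only [Pi.sub_apply, Pi.single_apply, if_neg hmi]
        split_ifs <;> norm_num
      linarith
    exact hmi ▸ hm k

lemma inv_one_add_apply_sub_le (hL : L.IsWeightedLaplacian) (i j k : ι) :
    (1 + L)⁻¹ k i - (1 + L)⁻¹ k j ≤ (1 + L)⁻¹ i i - (1 + L)⁻¹ i j := by
  have hunit : IsUnit (1 + L).det := hL.posDef_one_add.det_pos.ne'.isUnit
  have hy : (1 + L) *ᵥ ((1 + L)⁻¹ *ᵥ (Pi.single i 1 - Pi.single j 1)) =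
      Pi.single i 1 - Pi.single j 1 := by
    rw [mulVec_mulVec, mul_nonsing_inv _ hunit, one_mulVec]
  simpa [mulVec_sub] using hL.le_of_one_add_mulVec_eq hy k

end IsWeightedLaplacian

end Matrix

/-- For a weighted Laplacian matrix `L`, the matrix `Q = (1 + L)⁻¹` satisfies the
triangle inequality for proximities, strictly when `j = k` and `i ≠ j`. -/
theorem stmt_7 {n : ℕ} (L : Matrix (Fin n) (Fin n) ℝ)
    (hsym : L.IsSymm) (hoff : ∀ i j, i ≠ j → L i j ≤ 0)
    (hrow : ∀ i, ∑ j, L i j = 0) :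
    (∀ i j k, (1 + L)⁻¹ i j + (1 + L)⁻¹ i k - (1 + L)⁻¹ j k ≤ (1 + L)⁻¹ i i) ∧
    (∀ i j, i ≠ j → 2 * (1 + L)⁻¹ i j - (1 + L)⁻¹ j j < (1 + L)⁻¹ i i) := by
  have hL : L.IsWeightedLaplacian := ⟨hsym, hoff, hrow⟩
  have hQsymm : ∀ a b, (1 + L)⁻¹ a b = (1 + L)⁻¹ b a :=
    fun a b => ((isSymm_one.add hsym).inv.apply a b).symm
  refine ⟨fun i j k => ?_, fun i j hij => ?_⟩
  · have := hL.inv_one_add_apply_sub_le i j k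
    rw [hQsymm k i, hQsymm k j] at this
    linarith
  · have := hL.posDef_one_add.inv.add_apply_lt_add_apply hij
    rw [hQsymm j i] at this
    linarith
end

section
/- Let L be a weighted Laplacian matrix of order n, let k ≠ t be indices, let Δ > 0, and let L' = L + Δ·(e_k − e_t)·(e_k − e_t)ᵀ, where e_k, e_t are standard basis column vectors (L' is the Laplacian obtained by increasing the total edge weight between k and t by Δ). Let Q = (I + L)⁻¹ and Q' = (I + L')⁻¹. Then Q' k t − Q k t > 0, and for all indices i, j such that {i,j} ≠ {k,t} as unordered pairs (i.e., not (i = k and j = t) and not (i = t and j = k)), Q' k t − Q k t > Q' i j − Q i j. -/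
/-!
Write `A = 1 + L` and `v = A⁻¹ (e_k - e_t)`. By Sherman–Morrison, `Q' = Q - c • v vᵀ` with
`c = Δ / (1 + Δ (v k - v t)) > 0`, so `Q' i j - Q i j = -c v i v j` and everything reduces to
`v k * v t < v i * v j`, which holds once `v k > 0` is the strict maximum of `v` and `v t < 0` its
strict minimum.

This comes from a discrete maximum principle: at a maximiser `m` of `x`,
`((1 + L) x) m = x m + ∑ j, L m j (x j - x m) ≥ x m`. As the columns of `L` sum to zero,
`∑ v = ∑ (e_k - e_t) = 0`, so `max v > 0`, and every maximiser `m` has `(e_k - e_t) m ≥ v m > 0`,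
i.e. `m = k`. The same principle makes `1 + L` injective, hence invertible.
-/

open Matrix Finset

namespace Matrix

variable {ι 𝕜 : Type*} [Fintype ι] [DecidableEq ι]

section ShermanMorrison

variable [Field 𝕜]

theorem inv_add_vecMulVec {A : Matrix ι ι 𝕜} (hA : IsUnit A.det) (a b : ι → 𝕜)
    (hβ : 1 + b ⬝ᵥ (A⁻¹ *ᵥ a) ≠ 0) :
    (A + vecMulVec a b)⁻¹ =
      A⁻¹ - (1 + b ⬝ᵥ (A⁻¹ *ᵥ a))⁻¹ • vecMulVec (A⁻¹ *ᵥ a) (b ᵥ* A⁻¹) := by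
  refine inv_eq_right_inv ?_
  set β := b ⬝ᵥ (A⁻¹ *ᵥ a) with hβ_def
  have hAA : A * A⁻¹ = 1 := mul_nonsing_inv A hA
  have key : (1 + β)⁻¹ + (1 + β)⁻¹ * β = 1 := by field_simp
  calc (A + vecMulVec a b) * (A⁻¹ - (1 + β)⁻¹ • vecMulVec (A⁻¹ *ᵥ a) (b ᵥ* A⁻¹))
      = 1 + vecMulVec a (b ᵥ* A⁻¹)
          - ((1 + β)⁻¹ + (1 + β)⁻¹ * β) • vecMulVec a (b ᵥ* A⁻¹) := by
        rw [add_mul, mul_sub, mul_sub, hAA, Matrix.mul_smul, Matrix.mul_smul, mul_vecMulVec,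
          mulVec_mulVec, hAA, one_mulVec, vecMulVec_mul, vecMulVec_mul_vecMulVec, vecMulVec_smul,
          smul_smul, add_smul, ← hβ_def]
        abel
    _ = 1 := by rw [key, one_smul, add_sub_cancel_right]

theorem inv_add_smul_vecMulVec_self {A : Matrix ι ι 𝕜} (hA : IsUnit A.det) (hsymm : A.IsSymm)
    (Δ : 𝕜) (u : ι → 𝕜) (hβ : 1 + Δ * (u ⬝ᵥ (A⁻¹ *ᵥ u)) ≠ 0) :
    (A + Δ • vecMulVec u u)⁻¹ =
      A⁻¹ - (Δ / (1 + Δ * (u ⬝ᵥ (A⁻¹ *ᵥ u)))) • vecMulVec (A⁻¹ *ᵥ u) (A⁻¹ *ᵥ u) := by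
  have hu : u ᵥ* A⁻¹ = A⁻¹ *ᵥ u := by rw [← vecMul_transpose, hsymm.inv.eq]
  rw [← smul_vecMulVec, inv_add_vecMulVec hA _ _ (by simpa [mulVec_smul] using hβ)]
  simp only [mulVec_smul, dotProduct_smul, smul_vecMulVec, hu, smul_smul, smul_eq_mul,
    div_eq_inv_mul]

end ShermanMorrison

theorem sum_one_add_mulVec [Semiring 𝕜] {L : Matrix ι ι 𝕜} (hcol : ∀ j, ∑ i, L i j = 0)
    (x : ι → 𝕜) :
    ∑ i, ((1 + L) *ᵥ x) i = ∑ i, x i := by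
  rw [add_mulVec, one_mulVec]
  simp only [Pi.add_apply, sum_add_distrib, mulVec, dotProduct]
  rw [sum_comm]
  simp [← sum_mul, hcol]

section MaximumPrinciple

variable [CommRing 𝕜] [LinearOrder 𝕜] [IsStrictOrderedRing 𝕜] {L : Matrix ι ι 𝕜}

theorem le_one_add_mulVec_apply_of_forall_le (hoff : ∀ i j, i ≠ j → L i j ≤ 0)
    (hrow : ∀ i, ∑ j, L i j = 0) {x : ι → 𝕜} {m : ι} (hm : ∀ j, x j ≤ x m) :
    x m ≤ ((1 + L) *ᵥ x) m := by
  have hsplit : ((1 + L) *ᵥ x) m = x m + ∑ j, L m j * (x j - x m) := by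
    rw [add_mulVec, one_mulVec]
    simp [mulVec, dotProduct, mul_sub, sum_sub_distrib, ← sum_mul, hrow]
  rw [hsplit, le_add_iff_nonneg_right]
  refine sum_nonneg fun j _ => ?_
  rcases eq_or_ne m j with rfl | hmj
  · simp
  · exact mul_nonneg_of_nonpos_of_nonpos (hoff m j hmj) (sub_nonpos.2 (hm j))

theorem one_add_mulVec_apply_le_of_forall_ge (hoff : ∀ i j, i ≠ j → L i j ≤ 0)
    (hrow : ∀ i, ∑ j, L i j = 0) {x : ι → 𝕜} {m : ι} (hm : ∀ j, x m ≤ x j) :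
    ((1 + L) *ᵥ x) m ≤ x m := by
  simpa [mulVec_neg] using
    le_one_add_mulVec_apply_of_forall_le hoff hrow (x := -x) (m := m) (by simpa using hm)

theorem pos_and_lt_of_one_add_mulVec_eq_single_sub_single (hoff : ∀ i j, i ≠ j → L i j ≤ 0)
    (hrow : ∀ i, ∑ j, L i j = 0) (hcol : ∀ j, ∑ i, L i j = 0) {k t : ι} (hkt : k ≠ t)
    {v : ι → 𝕜} (hv : (1 + L) *ᵥ v = Pi.single k 1 - Pi.single t 1) :
    0 < v k ∧ ∀ j, j ≠ k → v j < v k := by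
  have hsum : ∑ i, v i = 0 := by
    rw [← sum_one_add_mulVec hcol, hv]
    simp [sum_sub_distrib]
  have hmax_eq : ∀ m, (∀ j, v j ≤ v m) → 0 < v m → m = k := by
    intro m hm hpos
    by_contra hmk
    have := le_one_add_mulVec_apply_of_forall_le hoff hrow hm
    rw [hv] at this
    simp [Pi.single_apply, hmk] at this
    split_ifs at this <;> linarith
  obtain ⟨m, -, hm⟩ := exists_max_image univ v ⟨k, mem_univ k⟩
  have hpos : 0 < v m := by
    by_contra! hle
    have hzero : v = 0 := by
      have := (sum_eq_zero_iff_of_nonpos fun j _ => (hm j (mem_univ j)).trans hle).1 hsum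
      exact funext fun j => this j (mem_univ j)
    have := congrFun hv k
    simp [hzero, hkt] at this
  obtain rfl := hmax_eq m (fun j => hm j (mem_univ j)) hpos
  refine ⟨hpos, fun j hj => lt_of_not_ge fun hmj => hj (hmax_eq j ?_ (hpos.trans_le hmj))⟩
  exact fun i => (hm i (mem_univ i)).trans hmj

theorem neg_and_gt_of_one_add_mulVec_eq_single_sub_single (hoff : ∀ i j, i ≠ j → L i j ≤ 0)
    (hrow : ∀ i, ∑ j, L i j = 0) (hcol : ∀ j, ∑ i, L i j = 0) {k t : ι} (hkt : k ≠ t)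
    {v : ι → 𝕜} (hv : (1 + L) *ᵥ v = Pi.single k 1 - Pi.single t 1) :
    v t < 0 ∧ ∀ j, j ≠ t → v t < v j := by
  have := pos_and_lt_of_one_add_mulVec_eq_single_sub_single hoff hrow hcol hkt.symm (v := -v)
    (by rw [mulVec_neg, hv, neg_sub])
  simpa only [Pi.neg_apply, neg_pos, neg_lt_neg_iff] using this

end MaximumPrinciple

theorem isUnit_det_one_add [Field 𝕜] [LinearOrder 𝕜] [IsStrictOrderedRing 𝕜] {L : Matrix ι ι 𝕜}
    (hoff : ∀ i j, i ≠ j → L i j ≤ 0) (hrow : ∀ i, ∑ j, L i j = 0) :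
    IsUnit (1 + L).det := by
  rw [isUnit_iff_ne_zero, Ne, ← exists_mulVec_eq_zero_iff]
  rintro ⟨x, hx0, hx⟩
  refine hx0 (funext fun j => le_antisymm ?_ ?_)
  · obtain ⟨m, -, hm⟩ := exists_max_image univ x ⟨j, mem_univ j⟩
    calc x j ≤ x m := hm j (mem_univ j)
      _ ≤ ((1 + L) *ᵥ x) m := le_one_add_mulVec_apply_of_forall_le hoff hrow (hm · (mem_univ _))
      _ = 0 := by rw [hx, Pi.zero_apply]
  · obtain ⟨m, -, hm⟩ := exists_min_image univ x ⟨j, mem_univ j⟩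
    calc (0 : 𝕜) = ((1 + L) *ᵥ x) m := by rw [hx, Pi.zero_apply]
      _ ≤ x m := one_add_mulVec_apply_le_of_forall_ge hoff hrow (hm · (mem_univ _))
      _ ≤ x j := hm j (mem_univ j)

end Matrix

theorem mul_lt_mul_of_forall_lt_of_forall_gt {ι 𝕜 : Type*} [CommRing 𝕜] [LinearOrder 𝕜]
    [IsStrictOrderedRing 𝕜] {v : ι → 𝕜} {k t : ι} (hk : 0 < v k) (ht : v t < 0)
    (hk_max : ∀ j, j ≠ k → v j < v k) (ht_min : ∀ j, j ≠ t → v t < v j) {i j : ι}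
    (hkt : ¬(i = k ∧ j = t)) (htk : ¬(i = t ∧ j = k)) :
    v k * v t < v i * v j := by
  have hj_le : v j ≤ v k := by
    rcases eq_or_ne j k with rfl | hj
    · rfl
    · exact (hk_max j hj).le
  have hj_ge : v t ≤ v j := by
    rcases eq_or_ne j t with rfl | hj
    · rfl
    · exact (ht_min j hj).le
  by_cases hik : i = k
  · subst hik
    have := ht_min j fun h => hkt ⟨rfl, h⟩
    nlinarith
  by_cases hit : i = t
  · subst hit
    have := hk_max j fun h => htk ⟨rfl, h⟩
    nlinarith
  have := hk_max i hik
  have := ht_min i hit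
  rcases le_total 0 (v i) with hi | hi <;> nlinarith

/-- Monotonicity (item 1) for relative forest accessibility: increasing the edge weight
between `k` and `t` by `Δ > 0` (i.e. replacing `L` by
`L' = L + Δ • (e_k - e_t)(e_k - e_t)ᵀ`) strictly increases `Q k t`, and the increment
of `Q k t` strictly exceeds that of any other entry `Q i j` with `{i,j} ≠ {k,t}`. -/
theorem stmt_8 {n : ℕ} (L : Matrix (Fin n) (Fin n) ℝ)
    (hsym : L.IsSymm) (hoff : ∀ i j, i ≠ j → L i j ≤ 0)
    (hrow : ∀ i, ∑ j, L i j = 0)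
    (k t : Fin n) (hkt : k ≠ t) (Δ : ℝ) (hΔ : 0 < Δ) :
    let u : Fin n → ℝ := Pi.single k 1 - Pi.single t 1
    let L' := L + Δ • Matrix.vecMulVec u u
    let Q := (1 + L)⁻¹
    let Q' := (1 + L')⁻¹
    Q' k t - Q k t > 0 ∧
    ∀ i j, ¬(i = k ∧ j = t) → ¬(i = t ∧ j = k) →
      Q' k t - Q k t > Q' i j - Q i j := by
  intro u L' Q Q'
  have hcol : ∀ j, ∑ i, L i j = 0 := fun j =>
    (sum_congr rfl fun i _ => hsym.apply j i).trans (hrow j)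
  have hdet := isUnit_det_one_add hoff hrow
  set v := Q *ᵥ u
  have hv : (1 + L) *ᵥ v = u := by simp [v, Q, mulVec_mulVec, mul_nonsing_inv _ hdet]
  obtain ⟨hvk, hk_max⟩ := pos_and_lt_of_one_add_mulVec_eq_single_sub_single hoff hrow hcol hkt hv
  obtain ⟨hvt, ht_min⟩ := neg_and_gt_of_one_add_mulVec_eq_single_sub_single hoff hrow hcol hkt hv
  have huv : u ⬝ᵥ v = v k - v t := by simp [u, sub_dotProduct, single_dotProduct]
  have hgap : 0 < v k - v t := sub_pos.2 (hvt.trans hvk)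
  have hc : 0 < Δ / (1 + Δ * (v k - v t)) := by positivity
  have hβ : 1 + Δ * (u ⬝ᵥ v) ≠ 0 := by rw [huv]; positivity
  have hQ' : Q' = Q - (Δ / (1 + Δ * (v k - v t))) • vecMulVec v v := by
    rw [← huv]
    exact (congrArg Inv.inv (add_assoc 1 L _).symm).trans
      (inv_add_smul_vecMulVec_self hdet (isSymm_one.add hsym) Δ u hβ)
  have hQ'_sub : ∀ i j, Q' i j - Q i j = -(Δ / (1 + Δ * (v k - v t)) * (v i * v j)) := by
    intro i j
    rw [hQ', Matrix.sub_apply, Matrix.smul_apply, vecMulVec_apply, smul_eq_mul]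
    ring
  refine ⟨?_, fun i j hkt' htk => ?_⟩
  · rw [hQ'_sub, gt_iff_lt, neg_pos]
    exact mul_neg_of_pos_of_neg hc (mul_neg_of_pos_of_neg hvk hvt)
  · rw [hQ'_sub, hQ'_sub, gt_iff_lt, neg_lt_neg_iff]
    exact mul_lt_mul_of_pos_left
      (mul_lt_mul_of_forall_lt_of_forall_gt hvk hvt hk_max ht_min hkt' htk) hc
end

section
/- Let L be a weighted Laplacian matrix of order n, let Q = (I + L)⁻¹, and let D be a set of indices that is a macrovertex for L, i.e., for all i, j ∈ D and k ∉ D, L i k = L j k. Then: (a) for all i, j ∈ D and k ∉ D, Q i k = Q j k; (b) if L' is any weighted Laplacian matrix of order n such that L' a b = L a b whenever not both a ∈ D and b ∈ D, then for all i ∈ D and k ∉ D, (I + L')⁻¹ i k = Q i k. -/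
/-!
Let `W_D` be the space of row vectors supported on `D` with coordinate sum zero. Zero row sums
make `x ↦ x L` preserve zero coordinate sums, and the macrovertex condition makes it preserve the
support condition on `W_D`; hence `1 + L` maps `W_D` into itself, and so does its inverse `Q` by
finite dimensionality. Part (a) is `(eᵢ - eⱼ) Q ∈ W_D`. For part (b), `Q - Q' = Q (L' - L) Q'`
and every row of `L' - L` lies in `W_D`, which `Q'` preserves. Strict diagonal dominance makes
`1 + L` invertible.
-/

open Matrix

variable {ι : Type*}

def Matrix.IsMacrovertex {R : Type*} (L : Matrix ι ι R) (D : Set ι) : Prop :=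
  ∀ i ∈ D, ∀ j ∈ D, ∀ k ∉ D, L i k = L j k

variable [Fintype ι]

def zeroSumSupportedOn (R : Type*) [CommRing R] (D : Set ι) : Submodule R (ι → R) where
  carrier := {x | (∀ k ∉ D, x k = 0) ∧ ∑ l, x l = 0}
  add_mem' := by
    rintro x y ⟨hx, hxs⟩ ⟨hy, hys⟩
    exact ⟨fun k hk => by simp [hx k hk, hy k hk], by simp [Finset.sum_add_distrib, hxs, hys]⟩
  zero_mem' := ⟨fun _ _ => rfl, by simp⟩
  smul_mem' := by
    rintro c x ⟨hx, hxs⟩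
    exact ⟨fun k hk => by simp [hx k hk], by simp [← Finset.mul_sum, hxs]⟩

section CommRing

variable {R : Type*} [CommRing R] {D : Set ι} {A : Matrix ι ι R}

theorem single_sub_single_mem_zeroSumSupportedOn [DecidableEq ι] {i j : ι} (hi : i ∈ D)
    (hj : j ∈ D) : Pi.single i 1 - Pi.single j 1 ∈ zeroSumSupportedOn R D := by
  refine ⟨fun k hk => ?_, by simp [Finset.sum_sub_distrib]⟩
  have hki : k ≠ i := fun h => hk (h ▸ hi)
  have hkj : k ≠ j := fun h => hk (h ▸ hj)
  simp [hki, hkj]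

theorem sum_vecMul_eq_zero (hrow : ∀ i, ∑ j, A i j = 0) (x : ι → R) : ∑ k, (x ᵥ* A) k = 0 := by
  simp only [vecMul, dotProduct]
  rw [Finset.sum_comm]
  simp [← Finset.mul_sum, hrow]

theorem vecMul_mem_zeroSumSupportedOn (hrow : ∀ i, ∑ j, A i j = 0) (hA : A.IsMacrovertex D)
    {x : ι → R} (hx : x ∈ zeroSumSupportedOn R D) : x ᵥ* A ∈ zeroSumSupportedOn R D := by
  obtain ⟨hsupp, hsum⟩ := hx
  refine ⟨fun k hk => ?_, sum_vecMul_eq_zero hrow x⟩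
  rcases D.eq_empty_or_nonempty with rfl | ⟨i₀, hi₀⟩
  · simp [vecMul, dotProduct, hsupp]
  · calc (x ᵥ* A) k = ∑ l, x l * A l k := rfl
      _ = ∑ l, x l * A i₀ k := by
          refine Finset.sum_congr rfl fun l _ => ?_
          by_cases hl : l ∈ D
          · rw [hA l hl i₀ hi₀ k hk]
          · simp [hsupp l hl]
      _ = 0 := by rw [← Finset.sum_mul, hsum, zero_mul]

theorem vecMul_mem_zeroSumSupportedOn_of_col_eq_zero (hrow : ∀ i, ∑ j, A i j = 0)
    (hcol : ∀ l, ∀ k ∉ D, A l k = 0) (x : ι → R) : x ᵥ* A ∈ zeroSumSupportedOn R D :=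
  ⟨fun k hk => by simp [vecMul, dotProduct, hcol _ k hk], sum_vecMul_eq_zero hrow x⟩

end CommRing

theorem Matrix.vecMul_nonsing_inv_mem {K : Type*} [Field K] [DecidableEq ι] {M : Matrix ι ι K}
    (hM : IsUnit M) {p : Submodule K (ι → K)} (hp : ∀ x ∈ p, x ᵥ* M ∈ p) {x : ι → K}
    (hx : x ∈ p) : x ᵥ* M⁻¹ ∈ p := by
  let f : p →ₗ[K] p := M.vecMulLinear.restrict hp
  have hf : Function.Injective f := fun y z h =>
    Subtype.ext (vecMul_injective_iff_isUnit.mpr hM (congrArg Subtype.val h))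
  obtain ⟨y, hy⟩ := LinearMap.injective_iff_surjective.mp hf ⟨x, hx⟩
  have hyx : y.1 ᵥ* M = x := congrArg Subtype.val hy
  rw [← hyx, vecMul_vecMul, mul_nonsing_inv _ ((isUnit_iff_isUnit_det M).mp hM), vecMul_one]
  exact y.2

section Field

variable {K : Type*} [Field K] [DecidableEq ι] {D : Set ι} {L L' : Matrix ι ι K}

theorem vecMul_inv_one_add_mem_zeroSumSupportedOn (hrow : ∀ i, ∑ j, L i j = 0)
    (hL : L.IsMacrovertex D) (hunit : IsUnit (1 + L)) {x : ι → K}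
    (hx : x ∈ zeroSumSupportedOn K D) : x ᵥ* (1 + L)⁻¹ ∈ zeroSumSupportedOn K D := by
  refine vecMul_nonsing_inv_mem hunit (fun y hy => ?_) hx
  rw [vecMul_add, vecMul_one]
  exact add_mem hy (vecMul_mem_zeroSumSupportedOn hrow hL hy)

theorem inv_one_add_apply_eq_of_isMacrovertex (hrow : ∀ i, ∑ j, L i j = 0)
    (hL : L.IsMacrovertex D) (hunit : IsUnit (1 + L)) {i j k : ι} (hi : i ∈ D) (hj : j ∈ D)
    (hk : k ∉ D) : (1 + L)⁻¹ i k = (1 + L)⁻¹ j k := by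
  have h := (vecMul_inv_one_add_mem_zeroSumSupportedOn hrow hL hunit
    (single_sub_single_mem_zeroSumSupportedOn hi hj)).1 k hk
  rw [sub_vecMul, single_one_vecMul, single_one_vecMul] at h
  exact sub_eq_zero.mp h

theorem inv_one_add_apply_eq_of_eq_off_isMacrovertex (hrow : ∀ i, ∑ j, L i j = 0)
    (hrow' : ∀ i, ∑ j, L' i j = 0) (hL : L.IsMacrovertex D)
    (hLL' : ∀ a b, ¬(a ∈ D ∧ b ∈ D) → L' a b = L a b) (hunit : IsUnit (1 + L))
    (hunit' : IsUnit (1 + L')) {i k : ι} (hk : k ∉ D) :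
    (1 + L')⁻¹ i k = (1 + L)⁻¹ i k := by
  have hL' : L'.IsMacrovertex D := fun a ha b hb c hc => by
    rw [hLL' a c (fun h => hc h.2), hLL' b c (fun h => hc h.2), hL a ha b hb c hc]
  have hresolvent : (1 + L)⁻¹ - (1 + L')⁻¹ = (1 + L)⁻¹ * (L' - L) * (1 + L')⁻¹ := by
    simp only [nonsing_inv_eq_ringInverse]
    rw [Ring.inverse_sub_inverse (iff_of_true hunit hunit'), add_sub_add_left_eq_sub]
  have hdiff : Pi.single i 1 ᵥ* (1 + L)⁻¹ ᵥ* (L' - L) ∈ zeroSumSupportedOn K D :=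
    vecMul_mem_zeroSumSupportedOn_of_col_eq_zero
      (fun l => by simp [Finset.sum_sub_distrib, hrow, hrow'])
      (fun l c hc => sub_eq_zero.mpr (hLL' l c (fun h => hc h.2))) _
  have h := (vecMul_inv_one_add_mem_zeroSumSupportedOn hrow' hL' hunit' hdiff).1 k hk
  rw [vecMul_vecMul, vecMul_vecMul, ← Matrix.mul_assoc, ← hresolvent, single_one_vecMul] at h
  exact (sub_eq_zero.mp h).symm

end Field

theorem Matrix.isUnit_one_add_of_nonpos_of_sum_row_eq_zero [DecidableEq ι] {L : Matrix ι ι ℝ}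
    (hoff : ∀ i j, i ≠ j → L i j ≤ 0) (hrow : ∀ i, ∑ j, L i j = 0) : IsUnit (1 + L) := by
  rw [isUnit_iff_isUnit_det, isUnit_iff_ne_zero]
  refine det_ne_zero_of_sum_row_lt_diag fun k => ?_
  have hoffsum : ∑ j ∈ Finset.univ.erase k, ‖(1 + L) k j‖ = L k k := by
    have hrowk := hrow k
    rw [← Finset.add_sum_erase _ _ (Finset.mem_univ k)] at hrowk
    rw [eq_neg_of_add_eq_zero_left hrowk, ← Finset.sum_neg_distrib]
    refine Finset.sum_congr rfl fun j hj => ?_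
    have hjk := Finset.ne_of_mem_erase hj
    rw [add_apply, one_apply_ne hjk.symm, zero_add, Real.norm_of_nonpos (hoff k j hjk.symm)]
  have hdiag : 0 ≤ L k k := by
    rw [← hoffsum]
    exact Finset.sum_nonneg fun _ _ => norm_nonneg _
  rw [hoffsum, add_apply, one_apply_eq, Real.norm_of_nonneg (by linarith)]
  linarith

theorem stmt_9_general {n : ℕ} (L : Matrix (Fin n) (Fin n) ℝ)
    (hoff : ∀ i j, i ≠ j → L i j ≤ 0)
    (hrow : ∀ i, ∑ j, L i j = 0)
    (D : Set (Fin n))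
    (hmacro : ∀ i ∈ D, ∀ j ∈ D, ∀ k ∉ D, L i k = L j k) :
    (∀ i ∈ D, ∀ j ∈ D, ∀ k ∉ D, (1 + L)⁻¹ i k = (1 + L)⁻¹ j k) ∧
    (∀ L' : Matrix (Fin n) (Fin n) ℝ, L'.IsSymm →
      (∀ i j, i ≠ j → L' i j ≤ 0) → (∀ i, ∑ j, L' i j = 0) →
      (∀ a b, ¬(a ∈ D ∧ b ∈ D) → L' a b = L a b) →
      ∀ i ∈ D, ∀ k ∉ D, (1 + L')⁻¹ i k = (1 + L)⁻¹ i k) := by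
  have hunit := isUnit_one_add_of_nonpos_of_sum_row_eq_zero hoff hrow
  refine ⟨fun i hi j hj k hk => inv_one_add_apply_eq_of_isMacrovertex hrow hmacro hunit hi hj hk,
    fun _ _ hoff₂ hrow₂ hagree i _ k hk => ?_⟩
  exact inv_one_add_apply_eq_of_eq_off_isMacrovertex hrow hrow₂ hmacro hagree hunit
    (isUnit_one_add_of_nonpos_of_sum_row_eq_zero hoff₂ hrow₂) hk

/-- Macrovertex independence for relative forest accessibility: if `D` is a macrovertex
of the weighted Laplacian `L` (i.e. `L i k = L j k` for all `i, j ∈ D` and `k ∉ D`), then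
(a) `Q i k = Q j k` for all `i, j ∈ D`, `k ∉ D`, and (b) these values do not change when
`L` is modified only inside `D`. -/
theorem stmt_9 {n : ℕ} (L : Matrix (Fin n) (Fin n) ℝ)
    (hsym : L.IsSymm) (hoff : ∀ i j, i ≠ j → L i j ≤ 0)
    (hrow : ∀ i, ∑ j, L i j = 0)
    (D : Set (Fin n))
    (hmacro : ∀ i ∈ D, ∀ j ∈ D, ∀ k ∉ D, L i k = L j k) :
    (∀ i ∈ D, ∀ j ∈ D, ∀ k ∉ D, (1 + L)⁻¹ i k = (1 + L)⁻¹ j k) ∧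
    (∀ L' : Matrix (Fin n) (Fin n) ℝ, L'.IsSymm →
      (∀ i j, i ≠ j → L' i j ≤ 0) → (∀ i, ∑ j, L' i j = 0) →
      (∀ a b, ¬(a ∈ D ∧ b ∈ D) → L' a b = L a b) →
      ∀ i ∈ D, ∀ k ∉ D, (1 + L')⁻¹ i k = (1 + L)⁻¹ i k) :=
  stmt_9_general L hoff hrow D hmacro
end

section
/- Let L be a weighted Laplacian matrix of order n and let Q = (I + L)⁻¹. Define the nonnegative matrix A by A i j = 0 if i = j and A i j = −(L i j) if i ≠ j (A is the matrix of total edge weights). Then for all indices i, j: Q i j = 0 if and only if (A^m) i j = 0 for every natural number m (i.e., Q i j = 0 exactly when there is no path from i to j in the underlying multigraph). -/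
/-!
Write `I + L = D - A` with `D` the diagonal matrix of `1 + L i i`. The row sums of `A` are
`L i i < 1 + L i i`, so `B = D⁻¹ A` is a nonnegative matrix of ∞-operator norm `< 1` and
`(I + L)⁻¹ = (∑ₖ Bᵏ) D⁻¹`. A sum of nonnegative terms vanishes iff every term does, and the
powers of `B` have the same zero pattern as those of `A`.
-/

open Finset

namespace Matrix

variable {ι : Type*} [Fintype ι] [DecidableEq ι]

theorem pow_apply_eq_zero_iff_of_apply_eq_zero_iff {R : Type*} [Semiring R] [PartialOrder R]
    [IsOrderedRing R] [NoZeroDivisors R] {A B : Matrix ι ι R} (hA : ∀ i j, 0 ≤ A i j)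
    (hB : ∀ i j, 0 ≤ B i j) (hAB : ∀ i j, A i j = 0 ↔ B i j = 0) (k : ℕ) (i j : ι) :
    (A ^ k) i j = 0 ↔ (B ^ k) i j = 0 := by
  induction k generalizing j with
  | zero => rfl
  | succ k ih =>
    rw [pow_succ, pow_succ, mul_apply, mul_apply,
      sum_eq_zero_iff_of_nonneg fun l _ ↦ mul_nonneg (pow_apply_nonneg hA k i l) (hA l j),
      sum_eq_zero_iff_of_nonneg fun l _ ↦ mul_nonneg (pow_apply_nonneg hB k i l) (hB l j)]
    simp only [mul_eq_zero, ih, hAB]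

section Neumann

open scoped Matrix.Norms.Operator

theorem linfty_opNorm_lt_one_of_sum_lt_one {B : Matrix ι ι ℝ} (hB : ∀ i j, 0 ≤ B i j)
    (hsum : ∀ i, ∑ j, B i j < 1) : ‖B‖ < 1 := by
  rw [linfty_opNorm_def, ← NNReal.coe_one, NNReal.coe_lt_coe, Finset.sup_lt_iff zero_lt_one]
  intro i _
  rw [← NNReal.coe_lt_coe, NNReal.coe_sum, NNReal.coe_one]
  simpa only [coe_nnnorm, Real.norm_of_nonneg (hB i _)] using hsum i

theorem hasSum_pow_apply_inv_one_sub {B : Matrix ι ι ℝ} (hB : ‖B‖ < 1) (i j : ι) :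
    HasSum (fun k ↦ (B ^ k) i j) ((1 - B)⁻¹ i j) := by
  have := hasSum_geom_series_inverse B hB
  rw [← nonsing_inv_eq_ringInverse] at this
  exact Pi.hasSum.mp (Pi.hasSum.mp this i) j

end Neumann

theorem inv_one_sub_apply_eq_zero_iff {B : Matrix ι ι ℝ} (hB : ∀ i j, 0 ≤ B i j)
    (hsum : ∀ i, ∑ j, B i j < 1) (i j : ι) :
    (1 - B)⁻¹ i j = 0 ↔ ∀ k, (B ^ k) i j = 0 := by
  have hs := hasSum_pow_apply_inv_one_sub (linfty_opNorm_lt_one_of_sum_lt_one hB hsum) i j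
  calc (1 - B)⁻¹ i j = 0 ↔ HasSum (fun k ↦ (B ^ k) i j) 0 := ⟨fun h ↦ h ▸ hs, hs.unique⟩
    _ ↔ ∀ k, (B ^ k) i j = 0 := by
      rw [hasSum_zero_iff_of_nonneg fun k ↦ pow_apply_nonneg hB k i j, funext_iff]
      rfl

theorem inv_diagonal_sub_apply_eq_zero_iff {d : ι → ℝ} {A : Matrix ι ι ℝ}
    (hA : ∀ i j, 0 ≤ A i j) (hd : ∀ i, ∑ j, A i j < d i) (i j : ι) :
    (diagonal d - A)⁻¹ i j = 0 ↔ ∀ m, (A ^ m) i j = 0 := by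
  have hd_pos (i : ι) : 0 < d i := (sum_nonneg fun j _ ↦ hA i j).trans_lt (hd i)
  have hdiag_inv : (diagonal d)⁻¹ = diagonal d⁻¹ :=
    inv_eq_right_inv <| by
      rw [diagonal_mul_diagonal, ← diagonal_one]
      exact congrArg diagonal (funext fun i ↦ mul_inv_cancel₀ (hd_pos i).ne')
  set B := diagonal d⁻¹ * A with hB_def
  have hB_apply (i j : ι) : B i j = (d i)⁻¹ * A i j := diagonal_mul _ _ _ _
  have hB (i j : ι) : 0 ≤ B i j := by
    rw [hB_apply]; exact mul_nonneg (inv_nonneg.2 (hd_pos i).le) (hA i j)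
  have hBsum (i : ι) : ∑ j, B i j < 1 := by
    simp only [hB_apply, ← mul_sum]
    exact (inv_mul_lt_one₀ (hd_pos i)).2 (hd i)
  have hBA (i j : ι) : B i j = 0 ↔ A i j = 0 := by
    rw [hB_apply, mul_eq_zero, or_iff_right (inv_ne_zero (hd_pos i).ne')]
  have hfac : diagonal d - A = diagonal d * (1 - B) := by
    rw [mul_sub, mul_one, hB_def, ← mul_assoc, ← hdiag_inv,
      mul_nonsing_inv _ (by simp [det_diagonal, prod_ne_zero_iff, (hd_pos _).ne']), one_mul]
  rw [hfac, mul_inv_rev, hdiag_inv, mul_diagonal, Pi.inv_apply, mul_eq_zero,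
    or_iff_left (inv_ne_zero (hd_pos j).ne'), inv_one_sub_apply_eq_zero_iff hB hBsum]
  exact forall_congr' fun m ↦ pow_apply_eq_zero_iff_of_apply_eq_zero_iff hB hA hBA m i j

end Matrix

open Matrix in
theorem stmt_10_general {n : ℕ} (L : Matrix (Fin n) (Fin n) ℝ)
    (hoff : ∀ i j, i ≠ j → L i j ≤ 0)
    (hrow : ∀ i, ∑ j, L i j = 0) :
    let A : Matrix (Fin n) (Fin n) ℝ :=
      Matrix.of fun i j => if i = j then 0 else -(L i j)
    ∀ i j, (1 + L)⁻¹ i j = 0 ↔ ∀ m : ℕ, (A ^ m) i j = 0 := by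
  intro A
  have hA (i j : Fin n) : 0 ≤ A i j := by
    by_cases h : i = j
    · simp [A, h]
    · simpa [A, h] using hoff i j h
  have hsplit : 1 + L = diagonal (fun i ↦ 1 + L i i) - A := by
    ext i j
    by_cases h : i = j
    · subst h; simp [A]
    · simp [A, h, one_apply_ne h]
  have hdom (i : Fin n) : ∑ j, A i j < 1 + L i i := by
    have := congrArg (fun M ↦ ∑ j, M i j) hsplit
    simp only [Matrix.add_apply, Matrix.sub_apply, one_apply, diagonal_apply,
      sum_add_distrib, sum_sub_distrib, sum_ite_eq, mem_univ, ↓reduceIte, hrow, add_zero] at this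
    linarith
  rw [hsplit]
  exact inv_diagonal_sub_apply_eq_zero_iff hA hdom

/-- Disconnection condition for relative forest accessibility: `Q i j = 0` if and only if
every power of the matrix `A` of total edge weights (`A i j = -(L i j)` off the diagonal,
`A i i = 0`) has zero `(i,j)` entry, i.e. there is no path from `i` to `j`. -/
theorem stmt_10 {n : ℕ} (L : Matrix (Fin n) (Fin n) ℝ)
    (hsym : L.IsSymm) (hoff : ∀ i j, i ≠ j → L i j ≤ 0)
    (hrow : ∀ i, ∑ j, L i j = 0) :
    let A : Matrix (Fin n) (Fin n) ℝ :=
      Matrix.of fun i j => if i = j then 0 else -(L i j)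
    ∀ i j, (1 + L)⁻¹ i j = 0 ↔ ∀ m : ℕ, (A ^ m) i j = 0 :=
  stmt_10_general L hoff hrow
end

section
/- Let n ≥ 2 and let E be a real n×n matrix with E i i = 0 for all i and 0 ≤ E i j < 1/(n−1) for all i, j, and let P = (I − E)⁻¹. Then P satisfies diagonal maximality: for all indices i ≠ j, P i i > P i j and P i i > P j i. -/
/-!
Write `P = (1 - E)⁻¹`, so that `P = 1 + E * P`. Since `E ≥ 0` has row sums `< 1`, any `x` with a
positive maximum at `m` satisfies `(E *ᵥ x) m < x m`. Hence `x ≤ E *ᵥ x` forces `x ≤ 0`; this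
makes `1 - E` invertible and, applied to minus a column of `P`, gives `P ≥ 0` and so `P j j ≥ 1`.
Column `j` of `P` agrees with `E` times itself away from `j` and is positive at `j`, so it attains
its maximum only at `j`. The hypotheses make both row and column sums of `E` less than `1`, and
the same argument for `Eᵀ` gives dominance along rows.
-/

open Finset

namespace Matrix

variable {ι : Type*} [Fintype ι] {E : Matrix ι ι ℝ}

theorem mulVec_apply_lt_of_le (hE : ∀ i j, 0 ≤ E i j) (hrow : ∀ i, ∑ k, E i k < 1)
    {x : ι → ℝ} {M : ℝ} (hxM : ∀ k, x k ≤ M) (hM : 0 < M) (i : ι) : (E *ᵥ x) i < M :=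
  calc (E *ᵥ x) i = ∑ k, E i k * x k := rfl
    _ ≤ ∑ k, E i k * M := sum_le_sum fun k _ => mul_le_mul_of_nonneg_left (hxM k) (hE i k)
    _ = (∑ k, E i k) * M := (sum_mul ..).symm
    _ < 1 * M := mul_lt_mul_of_pos_right (hrow i) hM
    _ = M := one_mul M

theorem nonpos_of_le_mulVec (hE : ∀ i j, 0 ≤ E i j) (hrow : ∀ i, ∑ k, E i k < 1)
    {x : ι → ℝ} (hx : ∀ i, x i ≤ (E *ᵥ x) i) (i : ι) : x i ≤ 0 := by
  obtain ⟨m, -, hm⟩ := exists_max_image univ x ⟨i, mem_univ i⟩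
  by_contra! hpos
  have hmax : ∀ k, x k ≤ x m := fun k => hm k (mem_univ k)
  have := mulVec_apply_lt_of_le hE hrow hmax (hpos.trans_le (hmax i)) m
  linarith [hx m]

theorem apply_lt_of_eq_mulVec_of_ne (hE : ∀ i j, 0 ≤ E i j) (hrow : ∀ i, ∑ k, E i k < 1)
    {x : ι → ℝ} {j : ι} (hx : ∀ i, i ≠ j → x i = (E *ᵥ x) i) (hj : 0 < x j)
    {i : ι} (hij : i ≠ j) : x i < x j := by
  obtain ⟨m, -, hm⟩ := exists_max_image univ x ⟨j, mem_univ j⟩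
  have hmax : ∀ k, x k ≤ x m := fun k => hm k (mem_univ k)
  have hlt : ∀ k, k ≠ j → x k < x m := fun k hk =>
    (hx k hk).trans_lt (mulVec_apply_lt_of_le hE hrow hmax (hj.trans_le (hmax j)) k)
  have hmj : m = j := by
    by_contra hmj
    exact lt_irrefl _ (hlt m hmj)
  exact hmj ▸ hlt i hij

variable [DecidableEq ι]

theorem isUnit_det_one_sub (hE : ∀ i j, 0 ≤ E i j) (hrow : ∀ i, ∑ k, E i k < 1) :
    IsUnit (1 - E).det := by
  refine isUnit_iff_ne_zero.mpr fun hdet => ?_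
  obtain ⟨v, hv, hEv⟩ := exists_mulVec_eq_zero_iff.mpr hdet
  have hfix : v = E *ᵥ v := by
    rwa [sub_mulVec, one_mulVec, sub_eq_zero] at hEv
  refine hv (funext fun i => le_antisymm ?_ ?_)
  · exact nonpos_of_le_mulVec hE hrow (fun k => (congrFun hfix k).le) i
  · have hneg : ∀ k, (-v) k ≤ (E *ᵥ -v) k := fun k => by
      rw [mulVec_neg, ← hfix]
    simpa using nonpos_of_le_mulVec hE hrow hneg i

theorem inv_one_sub_apply_eq (hE : ∀ i j, 0 ≤ E i j) (hrow : ∀ i, ∑ k, E i k < 1) (i j : ι) :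
    (1 - E)⁻¹ i j = (1 : Matrix ι ι ℝ) i j + (E *ᵥ fun k => (1 - E)⁻¹ k j) i := by
  have h := congrFun (congrFun (mul_nonsing_inv (1 - E) (isUnit_det_one_sub hE hrow)) i) j
  rw [sub_mul, one_mul, sub_apply, mul_apply] at h
  rw [← h]
  simp only [mulVec, dotProduct]
  ring

theorem inv_one_sub_nonneg (hE : ∀ i j, 0 ≤ E i j) (hrow : ∀ i, ∑ k, E i k < 1) (i j : ι) :
    0 ≤ (1 - E)⁻¹ i j := by
  have hsub : ∀ k, (-fun l => (1 - E)⁻¹ l j) k ≤ (E *ᵥ -fun l => (1 - E)⁻¹ l j) k := fun k => by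
    rw [mulVec_neg, Pi.neg_apply, Pi.neg_apply, neg_le_neg_iff, inv_one_sub_apply_eq hE hrow,
      le_add_iff_nonneg_left, one_apply]
    split_ifs <;> norm_num
  simpa using nonpos_of_le_mulVec hE hrow hsub i

theorem inv_one_sub_apply_lt_diag (hE : ∀ i j, 0 ≤ E i j) (hrow : ∀ i, ∑ k, E i k < 1)
    {i j : ι} (hij : i ≠ j) : (1 - E)⁻¹ i j < (1 - E)⁻¹ j j := by
  have hdiag_pos : 0 < (1 - E)⁻¹ j j := by
    rw [inv_one_sub_apply_eq hE hrow, one_apply_eq]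
    have : 0 ≤ (E *ᵥ fun k => (1 - E)⁻¹ k j) j :=
      sum_nonneg fun k _ => mul_nonneg (hE j k) (inv_one_sub_nonneg hE hrow k j)
    linarith
  refine apply_lt_of_eq_mulVec_of_ne (x := fun k => (1 - E)⁻¹ k j) hE hrow (fun k hk => ?_)
    hdiag_pos hij
  rw [inv_one_sub_apply_eq hE hrow, one_apply_ne hk, zero_add]

theorem inv_one_sub_apply_lt_diag' (hE : ∀ i j, 0 ≤ E i j) (hcol : ∀ j, ∑ k, E k j < 1)
    {i j : ι} (hij : i ≠ j) : (1 - E)⁻¹ j i < (1 - E)⁻¹ j j := by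
  have h := inv_one_sub_apply_lt_diag (E := Eᵀ) (fun a b => hE b a) hcol hij
  rwa [← transpose_one, ← transpose_sub, ← transpose_nonsing_inv] at h

end Matrix

theorem Finset.sum_lt_card_sub_one_mul {ι : Type*} [Fintype ι] [Nontrivial ι] {f : ι → ℝ}
    {c : ℝ} {i : ι} (hi : f i = 0) (hf : ∀ k, f k < c) :
    ∑ k, f k < (Fintype.card ι - 1) * c := by
  classical
  have hne : (univ.erase i).Nonempty := by
    obtain ⟨k, hk⟩ := exists_ne i
    exact ⟨k, mem_erase.mpr ⟨hk, mem_univ k⟩⟩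
  calc ∑ k, f k = ∑ k ∈ univ.erase i, f k := by
        rw [sum_erase_eq_sub (mem_univ i), hi, sub_zero]
    _ < ∑ _k ∈ univ.erase i, c := sum_lt_sum_of_nonempty hne fun k _ => hf k
    _ = (Fintype.card ι - 1) * c := by
        rw [sum_const, card_erase_of_mem (mem_univ i), card_univ, nsmul_eq_mul,
          Nat.cast_pred Fintype.card_pos]

/-- Diagonal maximality for route accessibility: if `E` has zero diagonal and entries in
`[0, 1/(n-1))`, then `P = (1 - E)⁻¹` satisfies `P i i > P i j` and `P i i > P j i`
whenever `i ≠ j`. -/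
theorem stmt_12 {n : ℕ} (hn : 2 ≤ n) (E : Matrix (Fin n) (Fin n) ℝ)
    (hdiag : ∀ i, E i i = 0)
    (hbound : ∀ i j, 0 ≤ E i j ∧ E i j < 1 / ((n : ℝ) - 1)) :
    ∀ i j, i ≠ j → (1 - E)⁻¹ i i > (1 - E)⁻¹ i j ∧ (1 - E)⁻¹ i i > (1 - E)⁻¹ j i := by
  have : Nontrivial (Fin n) := Fin.nontrivial_iff_two_le.mpr hn
  have hcard : ((Fintype.card (Fin n) : ℝ) - 1) * (1 / ((n : ℝ) - 1)) = 1 := by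
    have : (1 : ℝ) < n := by exact_mod_cast hn
    rw [Fintype.card_fin, mul_one_div_cancel (sub_ne_zero.mpr this.ne')]
  have hE : ∀ i j, 0 ≤ E i j := fun i j => (hbound i j).1
  have hrow : ∀ i, ∑ k, E i k < 1 := fun i =>
    hcard ▸ sum_lt_card_sub_one_mul (hdiag i) fun k => (hbound i k).2
  have hcol : ∀ j, ∑ k, E k j < 1 := fun j =>
    hcard ▸ sum_lt_card_sub_one_mul (f := fun k => E k j) (hdiag j) fun k => (hbound k j).2
  exact fun i j hij =>
    ⟨Matrix.inv_one_sub_apply_lt_diag' hE hcol hij.symm,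
      Matrix.inv_one_sub_apply_lt_diag hE hrow hij.symm⟩
end

section
/- Let L be a weighted Laplacian matrix of order n ≥ 1 that is connected, i.e., every vector x with L.mulVec x = 0 is a constant vector (a scalar multiple of the all-ones vector). Let α > 0 and let M = (L + (α/n)·J)⁻¹, where J is the all-ones n×n matrix. Then L + (α/n)·J is invertible and M satisfies diagonal maximality: for all indices i ≠ j, M i i > M i j. -/
/-!
Put `A = L + (α/n) J` and `M = A⁻¹`. Since the columns of `L` sum to zero, the entries of `A x`
sum to `α ∑ x`; this makes `A` injective on top of connectivity, and it shows that
`y = M (eᵢ - eⱼ)` has entry sum zero, so that `L y = A y = eᵢ - eⱼ`. Thus `y` is subharmonic away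
from `i`, and the maximum principle for a connected Laplacian puts the maximum of `y` at `i`.
As the entries of `y` sum to zero and `y ≠ 0`, this maximum `yᵢ = Mᵢᵢ - Mᵢⱼ` is positive.
-/

open Finset Matrix

namespace Matrix

variable {ι : Type*} {L : Matrix ι ι ℝ}

lemma mul_sub_nonneg_of_isMax (hoff : ∀ i j, i ≠ j → L i j ≤ 0) {y : ι → ℝ} {k : ι}
    (hk : ∀ l, y l ≤ y k) (l : ι) : 0 ≤ L k l * (y l - y k) := by
  rcases eq_or_ne k l with rfl | hkl
  · simp
  · exact mul_nonneg_of_nonpos_of_nonpos (hoff k l hkl) (sub_nonpos.2 (hk l))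

variable [Fintype ι]

lemma mulVec_apply_eq_sum_mul_sub (hrow : ∀ i, ∑ j, L i j = 0) (y : ι → ℝ) (k : ι) :
    (L *ᵥ y) k = ∑ l, L k l * (y l - y k) := by
  simp only [mulVec, dotProduct, mul_sub, sum_sub_distrib, ← sum_mul, hrow k, zero_mul, sub_zero]

lemma mulVec_apply_nonneg_of_isMax (hoff : ∀ i j, i ≠ j → L i j ≤ 0)
    (hrow : ∀ i, ∑ j, L i j = 0) {y : ι → ℝ} {k : ι} (hk : ∀ l, y l ≤ y k) :
    0 ≤ (L *ᵥ y) k := by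
  rw [mulVec_apply_eq_sum_mul_sub hrow]
  exact sum_nonneg fun l _ => mul_sub_nonneg_of_isMax hoff hk l

lemma eq_of_mulVec_apply_eq_zero_of_isMax (hoff : ∀ i j, i ≠ j → L i j ≤ 0)
    (hrow : ∀ i, ∑ j, L i j = 0) {y : ι → ℝ} {k : ι} (hk : ∀ l, y l ≤ y k)
    (h0 : (L *ᵥ y) k = 0) {l : ι} (hkl : L k l ≠ 0) : y l = y k := by
  rw [mulVec_apply_eq_sum_mul_sub hrow] at h0
  have hterm := (sum_eq_zero_iff_of_nonneg fun l _ => mul_sub_nonneg_of_isMax hoff hk l).1 h0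
    l (mem_univ l)
  exact sub_eq_zero.1 ((mul_eq_zero.1 hterm).resolve_left hkl)

lemma mulVec_indicator_eq_zero (hsym : L.IsSymm) (hrow : ∀ i, ∑ j, L i j = 0) {S : Set ι}
    (hS : ∀ k ∈ S, ∀ l, L k l ≠ 0 → l ∈ S) : L *ᵥ S.indicator 1 = 0 := by
  funext k
  by_cases hk : k ∈ S
  · have hterm : ∀ l, L k l * S.indicator 1 l = L k l := by
      intro l
      by_cases hl : l ∈ S
      · simp [hl]
      · simp [hl, not_imp_comm.1 (hS k hk l) hl]
    simp only [mulVec, dotProduct, hterm, hrow k, Pi.zero_apply]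
  · refine sum_eq_zero fun l _ => ?_
    by_cases hl : l ∈ S
    · have hkl : L k l = 0 := by
        rw [hsym.apply l k]
        exact not_imp_comm.1 (hS l hl k) hk
      simp [hkl]
    · simp [hl]

/-- The maximum principle: the set where `y` is maximal is closed under adjacency unless it
contains `i`, and a closed set of vertices of a connected graph is empty or everything. -/
theorem le_of_mulVec_apply_nonpos (hsym : L.IsSymm) (hoff : ∀ i j, i ≠ j → L i j ≤ 0)
    (hrow : ∀ i, ∑ j, L i j = 0) (hconn : ∀ x : ι → ℝ, L *ᵥ x = 0 → ∃ c : ℝ, x = fun _ => c)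
    {y : ι → ℝ} {i : ι} (hy : ∀ k, k ≠ i → (L *ᵥ y) k ≤ 0)
    (l : ι) : y l ≤ y i := by
  obtain ⟨k₀, -, hk₀⟩ := exists_max_image univ y ⟨i, mem_univ i⟩
  by_contra! hlt
  set S : Set ι := {k | y k = y k₀}
  have hmax : ∀ k ∈ S, ∀ l, y l ≤ y k := fun k hk l => (hk₀ l (mem_univ l)).trans_eq hk.symm
  have hS : ∀ k ∈ S, ∀ l, L k l ≠ 0 → l ∈ S := by
    intro k hk m hkm
    have hki : k ≠ i := by
      rintro rfl
      exact (hmax k hk l).not_gt hlt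
    have h0 : (L *ᵥ y) k = 0 :=
      le_antisymm (hy k hki) (mulVec_apply_nonneg_of_isMax hoff hrow (hmax k hk))
    exact (eq_of_mulVec_apply_eq_zero_of_isMax hoff hrow (hmax k hk) h0 hkm).trans hk
  have hi : i ∉ S := fun hi => (hmax i hi l).not_gt hlt
  obtain ⟨c, hc⟩ := hconn _ (mulVec_indicator_eq_zero hsym hrow hS)
  have h₀ := congrFun hc k₀
  have hi' := congrFun hc i
  simp only [Set.indicator_of_mem (show k₀ ∈ S from rfl), Set.indicator_of_notMem hi,
    Pi.one_apply] at h₀ hi'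
  exact one_ne_zero (h₀.trans hi'.symm)

theorem pos_of_mulVec_apply_nonpos (hsym : L.IsSymm) (hoff : ∀ i j, i ≠ j → L i j ≤ 0)
    (hrow : ∀ i, ∑ j, L i j = 0) (hconn : ∀ x : ι → ℝ, L *ᵥ x = 0 → ∃ c : ℝ, x = fun _ => c)
    {y : ι → ℝ} {i : ι} (hy : ∀ k, k ≠ i → (L *ᵥ y) k ≤ 0)
    (hne : L *ᵥ y ≠ 0) (hsum : ∑ k, y k = 0) : 0 < y i := by
  by_contra! hi
  have hnonpos : ∀ k ∈ univ, y k ≤ 0 := fun k _ =>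
    (le_of_mulVec_apply_nonpos hsym hoff hrow hconn hy k).trans hi
  have hzero : y = 0 := funext fun k => (sum_eq_zero_iff_of_nonpos hnonpos).1 hsum k (mem_univ k)
  exact hne (by simp [hzero])

lemma add_smul_ones_mulVec (c : ℝ) (x : ι → ℝ) :
    (L + c • of fun _ _ => 1) *ᵥ x = L *ᵥ x + fun _ => c * ∑ l, x l := by
  funext k
  simp [mulVec, dotProduct, add_mul, sum_add_distrib, mul_sum]

lemma sum_mulVec_eq_zero (hsym : L.IsSymm) (hrow : ∀ i, ∑ j, L i j = 0) (x : ι → ℝ) :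
    ∑ k, (L *ᵥ x) k = 0 := by
  simp only [mulVec, dotProduct]
  rw [sum_comm]
  exact sum_eq_zero fun l _ => by simp only [← sum_mul, ← hsym.apply, hrow l, zero_mul]

lemma sum_add_smul_ones_mulVec (hsym : L.IsSymm) (hrow : ∀ i, ∑ j, L i j = 0) (α : ℝ)
    (x : ι → ℝ) :
    ∑ k, ((L + (α / Fintype.card ι) • of fun _ _ => 1) *ᵥ x) k = α * ∑ l, x l := by
  rcases isEmpty_or_nonempty ι with hι | hι
  · simp
  · simp only [add_smul_ones_mulVec, Pi.add_apply, sum_add_distrib,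
      sum_mulVec_eq_zero hsym hrow, sum_const, card_univ, nsmul_eq_mul]
    field_simp
    ring

lemma eq_zero_of_add_smul_ones_mulVec_eq_zero (hsym : L.IsSymm) (hrow : ∀ i, ∑ j, L i j = 0)
    (hconn : ∀ x : ι → ℝ, L *ᵥ x = 0 → ∃ c : ℝ, x = fun _ => c) {α : ℝ} (hα : 0 < α)
    {x : ι → ℝ} (hx : (L + (α / Fintype.card ι) • of fun _ _ => 1) *ᵥ x = 0) : x = 0 := by
  have hsum : ∑ l, x l = 0 := by
    have h := sum_add_smul_ones_mulVec hsym hrow α x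
    rw [hx] at h
    simpa [hα.ne'] using h.symm
  obtain ⟨c, rfl⟩ : ∃ c : ℝ, x = fun _ => c := by
    refine hconn x ?_
    rwa [add_smul_ones_mulVec, hsum, mul_zero, ← Pi.zero_def, add_zero] at hx
  rcases isEmpty_or_nonempty ι with hι | hι
  · exact Subsingleton.elim _ _
  · obtain rfl : c = 0 := by simpa [Fintype.card_ne_zero] using hsum
    rfl

lemma isUnit_add_smul_ones [DecidableEq ι] (hsym : L.IsSymm) (hrow : ∀ i, ∑ j, L i j = 0)
    (hconn : ∀ x : ι → ℝ, L *ᵥ x = 0 → ∃ c : ℝ, x = fun _ => c) {α : ℝ} (hα : 0 < α) :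
    IsUnit (L + (α / Fintype.card ι) • of fun _ _ => 1) := by
  rw [isUnit_iff_isUnit_det, isUnit_iff_ne_zero, ne_eq, ← exists_mulVec_eq_zero_iff]
  rintro ⟨x, hx0, hx⟩
  exact hx0 (eq_zero_of_add_smul_ones_mulVec_eq_zero hsym hrow hconn hα hx)

theorem inv_add_smul_ones_apply_lt_apply_self [DecidableEq ι] (hsym : L.IsSymm)
    (hoff : ∀ i j, i ≠ j → L i j ≤ 0) (hrow : ∀ i, ∑ j, L i j = 0)
    (hconn : ∀ x : ι → ℝ, L *ᵥ x = 0 → ∃ c : ℝ, x = fun _ => c) {α : ℝ} (hα : 0 < α)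
    {i j : ι} (hij : i ≠ j) :
    (L + (α / Fintype.card ι) • of fun _ _ => 1 : Matrix ι ι ℝ)⁻¹ i j <
      (L + (α / Fintype.card ι) • of fun _ _ => 1 : Matrix ι ι ℝ)⁻¹ i i := by
  set A := L + (α / Fintype.card ι) • of fun _ _ => 1
  set y := A⁻¹ *ᵥ (Pi.single i 1 - Pi.single j 1)
  have hAy : A *ᵥ y = Pi.single i 1 - Pi.single j 1 := by
    rw [mulVec_mulVec, mul_nonsing_inv _ ((isUnit_iff_isUnit_det A).1
      (isUnit_add_smul_ones hsym hrow hconn hα)), one_mulVec]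
  have hsum : ∑ k, y k = 0 := by
    have h := sum_add_smul_ones_mulVec hsym hrow α y
    rw [hAy] at h
    simpa [sum_sub_distrib, hα.ne'] using h.symm
  have hLy : L *ᵥ y = Pi.single i 1 - Pi.single j 1 := by
    rwa [add_smul_ones_mulVec, hsum, mul_zero, ← Pi.zero_def, add_zero] at hAy
  have hpos := pos_of_mulVec_apply_nonpos hsym hoff hrow hconn (y := y) (i := i) ?_ ?_ hsum
  · simpa [y, mulVec_sub, mulVec_single_one] using hpos
  · intro k hk
    rw [hLy]
    simp only [Pi.sub_apply, Pi.single_apply, hk, if_false, zero_sub, neg_nonpos]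
    positivity
  · rw [hLy]
    intro h
    simpa [hij] using congrFun h i

end Matrix

theorem stmt_17_general {n : ℕ} (L : Matrix (Fin n) (Fin n) ℝ)
    (hsym : L.IsSymm) (hoff : ∀ i j, i ≠ j → L i j ≤ 0)
    (hrow : ∀ i, ∑ j, L i j = 0)
    (hconn : ∀ x : Fin n → ℝ, L.mulVec x = 0 → ∃ c : ℝ, x = fun _ => c)
    (α : ℝ) (hα : 0 < α) :
    let J : Matrix (Fin n) (Fin n) ℝ := Matrix.of fun _ _ => 1
    let M := (L + (α / (n : ℝ)) • J)⁻¹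
    IsUnit (L + (α / (n : ℝ)) • J) ∧
    ∀ i j, i ≠ j → M i i > M i j := by
  intro J M
  refine ⟨?_, fun i j hij => ?_⟩
  · simpa only [Fintype.card_fin] using isUnit_add_smul_ones hsym hrow hconn hα
  · simpa only [Fintype.card_fin] using
      inv_add_smul_ones_apply_lt_apply_self hsym hoff hrow hconn hα hij

/-- For a connected weighted Laplacian `L` (kernel spanned by the all-ones vector) and
`α > 0`, the matrix `L + (α/n) • J` (with `J` the all-ones matrix) is invertible, and
`M = (L + (α/n) • J)⁻¹`, the matrix of accessibilities via dense forests, satisfies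
diagonal maximality: `M i i > M i j` for `i ≠ j`. -/
theorem stmt_17 {n : ℕ} (hn : 1 ≤ n) (L : Matrix (Fin n) (Fin n) ℝ)
    (hsym : L.IsSymm) (hoff : ∀ i j, i ≠ j → L i j ≤ 0)
    (hrow : ∀ i, ∑ j, L i j = 0)
    (hconn : ∀ x : Fin n → ℝ, L.mulVec x = 0 → ∃ c : ℝ, x = fun _ => c)
    (α : ℝ) (hα : 0 < α) :
    let J : Matrix (Fin n) (Fin n) ℝ := Matrix.of fun _ _ => 1
    let M := (L + (α / (n : ℝ)) • J)⁻¹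
    IsUnit (L + (α / (n : ℝ)) • J) ∧
    ∀ i j, i ≠ j → M i i > M i j :=
  stmt_17_general L hsym hoff hrow hconn α hα
end

section
/- Let P be a symmetric real n×n matrix satisfying the triangle inequality for proximities: for all indices i, j, k, P i j + P i k − P j k ≤ P i i, with strict inequality whenever j = k and i ≠ j. Then the function d i j = P i i + P j j − 2·(P i j) is a metric on the index set: d i i = 0 for all i; d i j > 0 for all i ≠ j; d i j = d j i for all i, j; and d i j ≤ d i k + d k j for all i, j, k. -/
namespace Matrix

variable {ι : Type*}

def proximityDist (P : Matrix ι ι ℝ) (i j : ι) : ℝ := P i i + P j j - 2 * P i j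

variable {P : Matrix ι ι ℝ}

theorem proximityDist_self (i : ι) : P.proximityDist i i = 0 := by
  unfold proximityDist; ring

theorem proximityDist_pos {i j : ι} (hstrict : 2 * P i j - P j j < P i i) :
    0 < P.proximityDist i j := by
  unfold proximityDist; linarith

theorem proximityDist_comm (hsym : ∀ i j, P i j = P j i) (i j : ι) :
    P.proximityDist i j = P.proximityDist j i := by
  unfold proximityDist; rw [hsym i j]; ring

-- The triangle inequality for `d` through `k` is twice the proximity inequality centred at `k`.
theorem proximityDist_triangle (hsym : ∀ i j, P i j = P j i)
    (htri : ∀ i j k, P i j + P i k - P j k ≤ P i i) (i j k : ι) :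
    P.proximityDist i j ≤ P.proximityDist i k + P.proximityDist k j := by
  have h := htri k i j
  unfold proximityDist; rw [hsym i k]; linarith

end Matrix

/-- Metric representability of proximity: if `P` is symmetric and satisfies the triangle
inequality for proximities (strictly when `j = k` and `i ≠ j`), then
`d i j = P i i + P j j - 2 * P i j` is a metric on the index set. -/
theorem stmt_19 {n : ℕ} (P : Matrix (Fin n) (Fin n) ℝ)
    (hsym : ∀ i j, P i j = P j i)
    (htri : ∀ i j k, P i j + P i k - P j k ≤ P i i)
    (hstrict : ∀ i j, i ≠ j → 2 * P i j - P j j < P i i) :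
    let d : Fin n → Fin n → ℝ := fun i j => P i i + P j j - 2 * P i j
    (∀ i, d i i = 0) ∧
    (∀ i j, i ≠ j → 0 < d i j) ∧
    (∀ i j, d i j = d j i) ∧
    (∀ i j k, d i j ≤ d i k + d k j) :=
  ⟨Matrix.proximityDist_self, fun i j hij => Matrix.proximityDist_pos (hstrict i j hij),
    Matrix.proximityDist_comm hsym, Matrix.proximityDist_triangle hsym htri⟩
end
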